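/- Conversely, Verheul verification is sound over a field: if R is a field, G₁ is one-dimensional with nonzero generator g, ε is a nondegenerate bilinear map into a one-dimensional space, and a pair (P, S) in G₁ × G₁ satisfies ε(P, s • v) = ε(S, v) for the system key s and generator v : G₂ with ε(g, v) ≠ 0, then S = s • P; i.e., any certificate passing verification is a valid signature on P. -/

import Mathlib

theorem LinearMap.injective_of_forall_eq_smul_of_map_ne_zero {R M N : Type*} [Ring R]
    [AddCommGroup M] [Module R M] [AddCommGroup N] [Module R N] [NoZeroSMulDivisors R N]
    (f : M →ₗ[R] N) (g : M) (hg : f g ≠ 0) (hgen : ∀ x : M, ∃ r : R, x = r • g) :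
    Function.Injective f := by
  refine (injective_iff_map_eq_zero f).mpr fun x hx => ?_
  obtain ⟨r, rfl⟩ := hgen x
  rw [map_smul] at hx
  rw [(NoZeroSMulDivisors.eq_zero_or_eq_zero_of_smul_eq_zero hx).resolve_right hg, zero_smul]

theorem stmt15 {R G₁ G₂ F : Type*} [Field R]
    [AddCommGroup G₁] [Module R G₁] [AddCommGroup G₂] [Module R G₂]
    [AddCommGroup F] [Module R F] [NoZeroSMulDivisors R F]
    (ε : G₁ →ₗ[R] G₂ →ₗ[R] F) (g : G₁) (v : G₂)
    (hnd : ε g v ≠ 0)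
    (hgen : ∀ P : G₁, ∃ p : R, P = p • g)
    (s : R) (P S : G₁)
    (hver : ε P (s • v) = ε S v) :
    S = s • P := by
  have hinj : Function.Injective (ε.flip v) :=
    (ε.flip v).injective_of_forall_eq_smul_of_map_ne_zero g hnd hgen
  refine hinj ?_
  simpa only [LinearMap.flip_apply, map_smul, LinearMap.smul_apply] using hver.symm
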